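/- Let L be a wt-minimal n-lattice on elements 0, …, n−1. If 0 < i and i ⋖ j in L, then j < i as integers. -/

import Mathlib

namespace PaperLattice

variable {N : ℕ}

/-- Depth: one less than the maximum length of a chain from `t` down to `a` w.r.t. `le`. -/
noncomputable def dep (le : Fin N → Fin N → Prop) (t a : Fin N) : ℕ :=
  sSup {k | ∃ l : List (Fin N), List.Chain' (fun x y => le y x ∧ y ≠ x) l ∧
    l.head? = some t ∧ l.getLast? = some a ∧ l.length = k + 1}

/-- The `d`-th level: elements of depth `d`. -/
noncomputable def lev (le : Fin N → Fin N → Prop) (t : Fin N) (d : ℕ) : Set (Fin N) :=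
  {a | dep le t a = d}

/-- A labelled poset is levellised if depth is monotone in the nonzero labels. -/
def Levellised (le : Fin N → Fin N → Prop) (t : Fin N) : Prop :=
  ∀ i j : Fin N, 0 < (i : ℕ) → (i : ℕ) ≤ (j : ℕ) → dep le t i ≤ dep le t j

def lt' (le : Fin N → Fin N → Prop) (a b : Fin N) : Prop := le a b ∧ a ≠ b

/-- `b` covers `a`. -/
def CovByRel (le : Fin N → Fin N → Prop) (a b : Fin N) : Prop :=
  lt' le a b ∧ ∀ x, lt' le a x → lt' le x b → False

/-- The covering set of `a`. -/
def cov (le : Fin N → Fin N → Prop) (a : Fin N) : Set (Fin N) := {b | CovByRel le a b}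

/-- The up-set of `A`. -/
def upset (le : Fin N → Fin N → Prop) (A : Set (Fin N)) : Set (Fin N) :=
  {x | ∃ a ∈ A, le a x}

def AntichainRel (le : Fin N → Fin N → Prop) (A : Set (Fin N)) : Prop :=
  ∀ a ∈ A, ∀ b ∈ A, a ≠ b → ¬ le a b

/-- Binary weight of a set of labels. -/
noncomputable def wt (A : Set (Fin N)) : ℕ :=
  ∑ j : Fin N, A.indicator (fun j => 2 ^ (j : ℕ)) j

/-- `z` is a bottom and `o` a top for `le`. -/
def Bounds (le : Fin N → Fin N → Prop) (z o : Fin N) : Prop :=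
  (∀ a, le z a) ∧ (∀ a, le a o)

/-- The order obtained from `le` by adding `m` new atoms, the `i`-th having covering set `A i`. -/
def extLe {n m : ℕ} (le : Fin n → Fin n → Prop) (A : Fin m → Set (Fin n)) :
    Fin (n + m) → Fin (n + m) → Prop := fun x y =>
  if hx : (x : ℕ) < n then
    if hy : (y : ℕ) < n then le ⟨x, hx⟩ ⟨y, hy⟩
    else (x : ℕ) = 0
  else
    if hy : (y : ℕ) < n then
      (⟨y, hy⟩ : Fin n) ∈ upset le (A ⟨(x : ℕ) - n, by have := x.isLt; omega⟩)
    else x = y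

/-- The relabelled order `π(L)`. -/
def permLe {n : ℕ} (π : Equiv.Perm (Fin n)) (le : Fin n → Fin n → Prop) :
    Fin n → Fin n → Prop := fun a b => le (π.symm a) (π.symm b)


/-- The weight vector `(wt(cov 2), …, wt(cov (n-1)))` of a labelled lattice. -/
noncomputable def wtVec {n : ℕ} (le : Fin n → Fin n → Prop) : List ℕ :=
  ((List.finRange n).drop 2).map fun i => wt (cov le i)

lemma sum_range_two_pow (i : ℕ) : ∑ k ∈ Finset.range i, 2 ^ k < 2 ^ i := by
  induction i with
  | zero => simp
  | succ m ih => rw [Finset.sum_range_succ]; have : (2:ℕ)^(m+1) = 2^m + 2^m := by ring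
                 omega

lemma wt_lt_pow (A : Set (Fin N)) (i : ℕ) (hi : i ≤ N) (h : ∀ c ∈ A, (c : ℕ) < i) :
    wt A < 2 ^ i := by
  classical
  have h1 : wt A ≤ ∑ j : Fin N, (if (j : ℕ) < i then 2 ^ (j : ℕ) else 0) := by
    apply Finset.sum_le_sum
    intro c _
    by_cases hc : c ∈ A
    · rw [Set.indicator_of_mem hc, if_pos (h c hc)]
    · rw [Set.indicator_of_notMem hc]; exact Nat.zero_le _
  have h2 : ∑ j : Fin N, (if (j : ℕ) < i then 2 ^ (j : ℕ) else 0)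
      = ∑ k ∈ Finset.range N, (if k < i then 2 ^ k else 0) :=
    Fin.sum_univ_eq_sum_range (fun k => if k < i then 2 ^ k else 0) N
  have h3 : ∑ k ∈ Finset.range N, (if k < i then 2 ^ k else 0)
      = ∑ k ∈ Finset.range i, (if k < i then 2 ^ k else 0) := by
    refine (Finset.sum_subset (Finset.range_subset_range.mpr hi) ?_).symm
    intro x _ hx
    rw [if_neg (by simpa using hx)]
  have h4 : ∑ k ∈ Finset.range i, (if k < i then 2 ^ k else 0) = ∑ k ∈ Finset.range i, 2 ^ k :=
    Finset.sum_congr rfl fun x hx => if_pos (Finset.mem_range.mp hx)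
  calc wt A ≤ _ := h1
    _ < 2 ^ i := by rw [h2, h3, h4]; exact sum_range_two_pow i

lemma pow_le_wt (A : Set (Fin N)) (j : Fin N) (h : j ∈ A) : 2 ^ (j : ℕ) ≤ wt A := by
  classical
  have := Finset.single_le_sum (f := fun c : Fin N => A.indicator (fun c => 2 ^ (c : ℕ)) c)
    (fun c _ => Nat.zero_le _) (Finset.mem_univ j)
  simp only [Set.indicator_of_mem h] at this
  exact this

lemma lt'_permLe {n : ℕ} (π : Equiv.Perm (Fin n)) (le : Fin n → Fin n → Prop) (a b : Fin n) :
    lt' (permLe π le) a b ↔ lt' le (π.symm a) (π.symm b) := by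
  unfold lt' permLe
  constructor
  · rintro ⟨h1, h2⟩; exact ⟨h1, fun he => h2 (π.symm.injective he)⟩
  · rintro ⟨h1, h2⟩; exact ⟨h1, fun he => h2 (congrArg _ he)⟩

lemma covByRel_permLe {n : ℕ} (π : Equiv.Perm (Fin n)) (le : Fin n → Fin n → Prop)
    (a b : Fin n) : CovByRel (permLe π le) a b ↔ CovByRel le (π.symm a) (π.symm b) := by
  unfold CovByRel
  rw [lt'_permLe]
  constructor
  · rintro ⟨h1, h3⟩
    refine ⟨h1, fun x hx1 hx2 => h3 (π x) ?_ ?_⟩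
    · rw [lt'_permLe]; simpa using hx1
    · rw [lt'_permLe]; simpa using hx2
  · rintro ⟨h1, h3⟩
    refine ⟨h1, fun x hx1 hx2 => h3 (π.symm x) ?_ ?_⟩
    · rw [lt'_permLe] at hx1; exact hx1
    · rw [lt'_permLe] at hx2; exact hx2

lemma lex_map {n : ℕ} (f g : Fin n → ℕ) (i : Fin n) (hlt : g i < f i)
    (hf : ∀ a : Fin n, 2 ≤ (a : ℕ) → (a : ℕ) < (i : ℕ) → f a = g a) :
    ∀ l : List (Fin n), l.Pairwise (· < ·) → (∀ a ∈ l, 2 ≤ (a : ℕ)) → i ∈ l →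
      List.Lex (· < ·) (l.map g) (l.map f) := by
  intro l
  induction l with
  | nil => intro _ _ h; simp at h
  | cons a t ih =>
    intro hp h2 hmem
    rcases List.mem_cons.mp hmem with rfl | hmem
    · exact List.Lex.rel hlt
    · have ha : (a : ℕ) < (i : ℕ) := List.rel_of_pairwise_cons hp hmem
      have heq : f a = g a := hf a (h2 a List.mem_cons_self) ha
      simp only [List.map_cons]
      rw [← heq]
      exact List.Lex.cons (ih hp.of_cons (fun b hb => h2 b (List.mem_cons_of_mem a hb)) hmem)

lemma exists_max {n : ℕ} (L : Lattice (Fin n)) (S : Finset (Fin n)) (hS : S.Nonempty) :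
    ∃ x ∈ S, ∀ y ∈ S, L.le x y → y = x := by
  obtain ⟨x, hx, hmax⟩ := @Finset.exists_maximal _ L.toLE
    ⟨fun a b c => @le_trans _ L.toPreorder a b c⟩ S hS
  refine ⟨x, hx, fun y hy hle => ?_⟩
  by_contra hne
  exact hne (@le_antisymm _ L.toSemilatticeSup.toPartialOrder y x (hmax hy hle) hle)




/-- in a `wt`-minimal `n`-lattice, every cover `j` of a nonzero element `i`
satisfies `j < i` as integers. -/
theorem statement4 {n : ℕ} (hn : 2 ≤ n) (L : Lattice (Fin n))
    (hb : Bounds L.le ⟨0, by omega⟩ ⟨1, by omega⟩)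
    (hmin : ∀ π : Equiv.Perm (Fin n),
      Bounds (permLe π L.le) ⟨0, by omega⟩ ⟨1, by omega⟩ →
      ¬ List.Lex (· < ·) (wtVec (permLe π L.le)) (wtVec L.le)) :
    ∀ i j : Fin n, 0 < (i : ℕ) → CovByRel L.le i j → (j : ℕ) < (i : ℕ) := by

  by_contra hcon
  push_neg at hcon
  obtain ⟨i0, j0, hi0, hcov0, hij0⟩ := hcon
  classical
  have hS : {m : ℕ | ∃ i j : Fin n,
      (i : ℕ) = m ∧ 0 < (i : ℕ) ∧ CovByRel L.le i j ∧ (i : ℕ) ≤ (j : ℕ)}.Nonempty :=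
    ⟨i0, i0, j0, rfl, hi0, hcov0, hij0⟩
  obtain ⟨i, j, him, hipos, hcov, hij⟩ := Nat.sInf_mem hS
  -- minimality
  have hminr : ∀ r c : Fin n, 0 < (r : ℕ) → (r : ℕ) < (i : ℕ) → CovByRel L.le r c →
      (c : ℕ) < (r : ℕ) := by
    intro r c hr hrm hc
    by_contra hge
    push_neg at hge
    have hle' : sInf {m : ℕ | ∃ i j : Fin n,
        (i : ℕ) = m ∧ 0 < (i : ℕ) ∧ CovByRel L.le i j ∧ (i : ℕ) ≤ (j : ℕ)} ≤ (r : ℕ) :=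
      Nat.sInf_le ⟨r, c, rfl, hr, hc, hge⟩
    omega
  -- i ≥ 2
  have hm2 : 2 ≤ (i : ℕ) := by
    rcases Nat.lt_or_ge (i : ℕ) 2 with h | h
    · exfalso
      have hi1 : i = ⟨1, by omega⟩ := Fin.ext (by simp only [Fin.val_mk]; omega)
      exact hcov.1.2 (L.le_antisymm i j hcov.1.1 (hi1 ▸ hb.2 j))
    · exact h
  -- maximal element x among labels ≥ i
  obtain ⟨x, hxS, hxmax⟩ := exists_max L (Finset.univ.filter fun y => (i : ℕ) ≤ (y : ℕ))
    ⟨i, by simp⟩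
  have hxge : (i : ℕ) ≤ (x : ℕ) := (Finset.mem_filter.mp hxS).2
  have hxcov : ∀ c ∈ cov L.le x, (c : ℕ) < (i : ℕ) := by
    intro c hc
    by_contra hge
    push_neg at hge
    exact hc.1.2 (hxmax c (Finset.mem_filter.mpr ⟨Finset.mem_univ c, hge⟩) hc.1.1).symm
  set σ := Equiv.swap i x with hσ
  have hσsymm : σ.symm = σ := Equiv.symm_swap i x
  have hσfix : ∀ c : Fin n, (c : ℕ) < (i : ℕ) → σ c = c := by
    intro c hcl
    refine Equiv.swap_apply_of_ne_of_ne ?_ ?_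
    · exact fun h => absurd (congrArg Fin.val h) (by omega)
    · exact fun h => absurd (congrArg Fin.val h) (by omega)
  have hσi : σ i = x := Equiv.swap_apply_left i x
  -- Bounds for the relabelled order
  have hB : Bounds (permLe σ L.le) ⟨0, by omega⟩ ⟨1, by omega⟩ := by
    constructor
    · intro a
      show L.le (σ.symm ⟨0, by omega⟩) (σ.symm a)
      rw [hσsymm, hσfix ⟨0, by omega⟩ (by simp; omega)]
      exact hb.1 _
    · intro a
      show L.le (σ.symm a) (σ.symm ⟨1, by omega⟩)
      rw [hσsymm, hσfix ⟨1, by omega⟩ (by simp; omega)]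
      exact hb.2 _
  -- covering sets under the relabelled order
  have hcovP : ∀ r : Fin n, (∀ c ∈ cov L.le (σ r), (c : ℕ) < (i : ℕ)) →
      cov (permLe σ L.le) r = cov L.le (σ r) := by
    intro r hr
    ext b
    simp only [cov, Set.mem_setOf_eq]
    rw [covByRel_permLe, hσsymm]
    constructor
    · intro h
      have hlt := hr (σ b) h
      have h1 : σ (σ b) = σ b := hσfix _ hlt
      have h2 : σ (σ b) = b := Equiv.swap_apply_self i x b
      rw [← h2, h1]
      exact h
    · intro h
      have hlt := hr b h
      rw [hσfix b hlt]
      exact h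
  -- weights agree below i
  have hfg : ∀ r : Fin n, 2 ≤ (r : ℕ) → (r : ℕ) < (i : ℕ) →
      wt (cov L.le r) = wt (cov (permLe σ L.le) r) := by
    intro r h2r hri
    have hσr : σ r = r := hσfix r hri
    have hrcov : ∀ c ∈ cov L.le (σ r), (c : ℕ) < (i : ℕ) := by
      rw [hσr]
      intro c hc
      exact lt_trans (hminr r c (by omega) hri hc) hri
    rw [hcovP r hrcov, hσr]
  -- strict drop at position i
  have hgi : wt (cov (permLe σ L.le) i) < wt (cov L.le i) := by
    have hx' : ∀ c ∈ cov L.le (σ i), (c : ℕ) < (i : ℕ) := by rw [hσi]; exact hxcov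
    rw [hcovP i hx', hσi]
    have h1 : wt (cov L.le x) < 2 ^ (i : ℕ) := wt_lt_pow _ _ (le_of_lt i.isLt) hxcov
    have h2 : 2 ^ (i : ℕ) ≤ wt (cov L.le i) :=
      le_trans (Nat.pow_le_pow_right (by omega) hij) (pow_le_wt _ j hcov)
    omega
  -- lex comparison
  have hlex : List.Lex (· < ·) (wtVec (permLe σ L.le)) (wtVec L.le) := by
    unfold wtVec
    apply lex_map (fun r => wt (cov L.le r)) (fun r => wt (cov (permLe σ L.le) r)) i hgi
      (fun a h2a hai => hfg a h2a hai)
    · exact (List.pairwise_lt_finRange n).sublist (List.drop_sublist 2 _)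
    · intro a ha
      obtain ⟨k, hk, hak⟩ := List.mem_iff_getElem.mp ha
      have : ((List.finRange n).drop 2)[k] = (List.finRange n)[2 + k]'(by simp at hk ⊢; omega) :=
        List.getElem_drop ..
      rw [this] at hak
      have : ((List.finRange n)[2 + k]'(by simp at hk ⊢; omega) : Fin n) =
          ⟨2 + k, by simp at hk; omega⟩ := by simp [List.getElem_finRange]
      rw [this] at hak
      rw [← hak]
      simp
    · have hlen : (i : ℕ) - 2 < ((List.finRange n).drop 2).length := by
        simp
        omega
      have h1 : ((List.finRange n).drop 2)[(i : ℕ) - 2] =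
          (List.finRange n)[2 + ((i : ℕ) - 2)]'(by simp; omega) := List.getElem_drop ..
      have h2 : ((List.finRange n)[2 + ((i : ℕ) - 2)]'(by simp; omega) : Fin n) =
          ⟨2 + ((i : ℕ) - 2), by omega⟩ := by simp [List.getElem_finRange]
      have h3 : (⟨2 + ((i : ℕ) - 2), by omega⟩ : Fin n) = i := Fin.ext (by simp; omega)
      have := List.getElem_mem hlen
      rwa [h1, h2, h3] at this
  exact hmin σ hB hlex

end PaperLattice
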